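/- For every element w of the Weyl group W(E₇), the inner product ⟨û₇, w(û₇)⟩ lies in the set {1, 1/3, −1/3, −1}. (Equivalently: the distance between two vertices of type 7 of the Coxeter complex of type E₇ is one of 0, arccos(1/3), arccos(−1/3), π.) -/

import Mathlib

noncomputable section

open scoped RealInnerProductSpace

/-- Euclidean space `ℝ⁸`. -/
abbrev E8Space := EuclideanSpace ℝ (Fin 8)

/-- The fundamental root vectors of the root system of type `E₇` inside `ℝ⁸`:
`r₁ = ½(1,1,1,−1,−1,−1,−1,−1)`, `rᵢ = eᵢ − eᵢ₋₁` for `2 ≤ i ≤ 6`, and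
`r₇ = ½(1,1,1,1,1,−1,1,1)` (here indexed by `Fin 7`, with `j = 0` corresponding
to `r₁` and `j = 6` to `r₇`). -/
def E7root : Fin 7 → E8Space := fun j =>
  if j = 0 then WithLp.toLp 2 (fun i : Fin 8 => if (i : ℕ) < 3 then (1 : ℝ) / 2 else -(1 / 2))
  else if j = 6 then WithLp.toLp 2 (fun i : Fin 8 => if (i : ℕ) = 5 then -(1 : ℝ) / 2 else 1 / 2)
  else WithLp.toLp 2 (fun i : Fin 8 => if (i : ℕ) = (j : ℕ) then (1 : ℝ)
        else if (i : ℕ) + 1 = (j : ℕ) then -1 else 0)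

/-- The Weyl group `W(E₇)`: the subgroup of linear isometries of `ℝ⁸` generated by the
reflections `s_r(x) = x − 2(⟨x,r⟩/⟨r,r⟩)r` in the fundamental root vectors of type `E₇`.
These generators preserve the subspace `V = {x : x₇ = x₈}` realizing the Coxeter
complex of type `E₇`. -/
def WeylE7 : Subgroup (E8Space ≃ₗᵢ[ℝ] E8Space) :=
  Subgroup.closure
    { f | ∃ j : Fin 7, ∀ x : E8Space,
        f x = x - ((2 * ⟪x, E7root j⟫ / ⟪E7root j, E7root j⟫) • E7root j) }

/-- `û₇ = (1,1,1,1,1,1,0,0)/√6`, a unit vector representing a vertex of type 7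
of the Coxeter complex of type `E₇`. -/
def u7hatE7 : E8Space := WithLp.toLp 2 (fun i : Fin 8 => (if (i : ℕ) < 6 then 1 else 0) / Real.sqrt 6)

/-! Up to the factor `√6 / 2`, `û₇` is the fundamental weight `ω = ½(1,1,1,1,1,1,0,0)`: it pairs
integrally with every root and `⟪ω, ω⟫ = 3/2`. A reflection `s_r` moves a vector of the coset
`ω + Q` of the root lattice `Q` by the integer multiple `⟪x, r⟫ r` of a root, so `w ω - ω ∈ Q` and
`⟪ω, w ω⟫ ∈ 3/2 + ℤ`. By Cauchy–Schwarz `|⟪ω, w ω⟫| ≤ 3/2`, which leaves `±3/2` and `±1/2`. -/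

section ReflectionGroup

variable {E ι : Type*} [NormedAddCommGroup E] [InnerProductSpace ℝ E]

def reflectionGroup (r : ι → E) : Subgroup (E ≃ₗᵢ[ℝ] E) :=
  Subgroup.closure {f | ∃ j, ∀ x : E, f x = x - ((2 * ⟪x, r j⟫ / ⟪r j, r j⟫) • r j)}

def rootLattice (r : ι → E) : AddSubgroup E :=
  AddSubgroup.closure (Set.range r)

lemma reflection_apply_apply {r : E} (hr : ⟪r, r⟫ = 2) {f : E → E}
    (hf : ∀ x, f x = x - ⟪x, r⟫ • r) (x : E) : f (f x) = x := by
  have h : ⟪f x, r⟫ = -⟪x, r⟫ := by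
    rw [hf, inner_sub_left, real_inner_smul_left, hr]; ring
  rw [hf (f x), h, neg_smul, sub_neg_eq_add, hf, sub_add_cancel]

variable {r : ι → E}

lemma inner_mem_zmultiples_of_mem_rootLattice {x y : E}
    (hy : ∀ j, ⟪r j, y⟫ ∈ AddSubgroup.zmultiples (1 : ℝ)) (hx : x ∈ rootLattice r) :
    ⟪x, y⟫ ∈ AddSubgroup.zmultiples (1 : ℝ) := by
  induction hx using AddSubgroup.closure_induction with
  | mem _ h => obtain ⟨j, rfl⟩ := h; exact hy j
  | zero => simp
  | add _ _ _ _ h₁ h₂ => rw [inner_add_left]; exact add_mem h₁ h₂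
  | neg _ _ h => rw [inner_neg_left]; exact neg_mem h

variable (hr : ∀ j, ⟪r j, r j⟫ = 2)
  (hcartan : ∀ i j, ⟪r i, r j⟫ ∈ AddSubgroup.zmultiples (1 : ℝ))
  {ω : E} (hω : ∀ j, ⟪r j, ω⟫ ∈ AddSubgroup.zmultiples (1 : ℝ))
include hr hcartan hω

lemma reflection_sub_mem_rootLattice_iff {f : E ≃ₗᵢ[ℝ] E} {j : ι}
    (hf : ∀ x, f x = x - ((2 * ⟪x, r j⟫ / ⟪r j, r j⟫) • r j)) (x : E) :
    f x - ω ∈ rootLattice r ↔ x - ω ∈ rootLattice r := by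
  have hf' : ∀ x, f x = x - ⟪x, r j⟫ • r j := fun x => by
    rw [hf, hr, mul_div_cancel_left₀ _ two_ne_zero]
  have hstable : ∀ x, x - ω ∈ rootLattice r → f x - ω ∈ rootLattice r := by
    intro x hx
    have hxj : ⟪x, r j⟫ ∈ AddSubgroup.zmultiples (1 : ℝ) := by
      rw [← sub_add_cancel x ω, inner_add_left, real_inner_comm (r j) ω]
      exact add_mem (inner_mem_zmultiples_of_mem_rootLattice (fun i => hcartan i j) hx) (hω j)
    obtain ⟨n, hn⟩ := AddSubgroup.mem_zmultiples_iff.1 hxj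
    rw [hf', sub_right_comm, ← hn, zsmul_one, Int.cast_smul_eq_zsmul]
    exact sub_mem hx (zsmul_mem (AddSubgroup.subset_closure (Set.mem_range_self j)) n)
  refine ⟨fun h => ?_, hstable x⟩
  simpa only [reflection_apply_apply (hr j) hf'] using hstable (f x) h

theorem sub_mem_rootLattice_of_mem_reflectionGroup {w : E ≃ₗᵢ[ℝ] E}
    (hw : w ∈ reflectionGroup r) : w ω - ω ∈ rootLattice r := by
  suffices h : ∀ x, w x - ω ∈ rootLattice r ↔ x - ω ∈ rootLattice r by
    simpa using (h ω).2 (by simp)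
  induction hw using Subgroup.closure_induction with
  | mem f hf => obtain ⟨j, hf⟩ := hf; exact reflection_sub_mem_rootLattice_iff hr hcartan hω hf
  | one => exact fun _ => Iff.rfl
  | mul a b _ _ ha hb => exact fun x => (ha (b x)).trans (hb x)
  | inv a _ ha => exact fun x => by simpa using (ha (a⁻¹ x)).symm

theorem inner_apply_sub_inner_self_mem_zmultiples {w : E ≃ₗᵢ[ℝ] E}
    (hw : w ∈ reflectionGroup r) : ⟪ω, w ω⟫ - ⟪ω, ω⟫ ∈ AddSubgroup.zmultiples (1 : ℝ) := by
  rw [← inner_sub_right, real_inner_comm]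
  exact inner_mem_zmultiples_of_mem_rootLattice hω
    (sub_mem_rootLattice_of_mem_reflectionGroup hr hcartan hω hw)

end ReflectionGroup

def E7weight7 : E8Space := WithLp.toLp 2 (fun i : Fin 8 => if (i : ℕ) < 6 then (1 : ℝ) / 2 else 0)

lemma WeylE7_eq_reflectionGroup : WeylE7 = reflectionGroup E7root := rfl

lemma inner_E7root_self (j : Fin 7) : ⟪E7root j, E7root j⟫ = 2 := by
  rw [EuclideanSpace.inner_eq_star_dotProduct]
  fin_cases j <;> simp [E7root, dotProduct, Fin.sum_univ_eight] <;> norm_num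

lemma inner_E7root_mem_zmultiples (i j : Fin 7) :
    ⟪E7root i, E7root j⟫ ∈ AddSubgroup.zmultiples (1 : ℝ) := by
  rcases eq_or_ne i j with rfl | hij
  · exact ⟨2, by rw [inner_E7root_self]; norm_num⟩
  rw [EuclideanSpace.inner_eq_star_dotProduct]
  fin_cases i <;> fin_cases j <;> simp_all [E7root, dotProduct, Fin.sum_univ_eight] <;> norm_num

lemma inner_E7root_E7weight7 (j : Fin 7) :
    ⟪E7root j, E7weight7⟫ = if j = 6 then 1 else 0 := by
  rw [EuclideanSpace.inner_eq_star_dotProduct]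
  fin_cases j <;> simp [E7root, E7weight7, dotProduct, Fin.sum_univ_eight]
  norm_num

lemma inner_E7root_E7weight7_mem_zmultiples (j : Fin 7) :
    ⟪E7root j, E7weight7⟫ ∈ AddSubgroup.zmultiples (1 : ℝ) := by
  rw [inner_E7root_E7weight7]
  split_ifs
  exacts [AddSubgroup.mem_zmultiples 1, zero_mem _]

lemma inner_E7weight7_self : ⟪E7weight7, E7weight7⟫ = 3 / 2 := by
  rw [EuclideanSpace.inner_eq_star_dotProduct]
  norm_num [E7weight7, dotProduct, Fin.sum_univ_eight]

lemma u7hatE7_eq_smul : u7hatE7 = (2 / Real.sqrt 6) • E7weight7 := by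
  ext i; fin_cases i <;> simp [u7hatE7, E7weight7] <;> ring

theorem inner_u7hatE7_orbit (w : E8Space ≃ₗᵢ[ℝ] E8Space) (hw : w ∈ WeylE7) :
    ⟪u7hatE7, w u7hatE7⟫ ∈ ({1, 1/3, -1/3, -1} : Set ℝ) := by
  have hu : ⟪u7hatE7, w u7hatE7⟫ = 2 / 3 * ⟪E7weight7, w E7weight7⟫ := by
    rw [u7hatE7_eq_smul, map_smul, real_inner_smul_left, real_inner_smul_right, ← mul_assoc,
      div_mul_div_comm, Real.mul_self_sqrt (by norm_num)]
    norm_num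
  obtain ⟨n, hn⟩ := AddSubgroup.mem_zmultiples_iff.1 <|
    inner_apply_sub_inner_self_mem_zmultiples inner_E7root_self inner_E7root_mem_zmultiples
      inner_E7root_E7weight7_mem_zmultiples (WeylE7_eq_reflectionGroup ▸ hw)
  have hinner : ⟪E7weight7, w E7weight7⟫ = 3 / 2 + n := by
    rw [zsmul_one, inner_E7weight7_self] at hn
    linarith
  have hbound : |⟪E7weight7, w E7weight7⟫| ≤ 3 / 2 :=
    calc |⟪E7weight7, w E7weight7⟫| ≤ ‖E7weight7‖ * ‖w E7weight7‖ := abs_real_inner_le_norm _ _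
      _ = ⟪E7weight7, E7weight7⟫ := by rw [w.norm_map, real_inner_self_eq_norm_mul_norm]
      _ = 3 / 2 := inner_E7weight7_self
  rw [hinner, abs_le] at hbound
  have hn0 : n ≤ 0 := by exact_mod_cast (by linarith : (n : ℝ) ≤ 0)
  have hn3 : -3 ≤ n := by exact_mod_cast (by linarith : (-3 : ℝ) ≤ n)
  rw [hu, hinner]
  interval_cases n <;> norm_num
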